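/- arXiv:2303.04665 — 3 statements merged into one kernel-verified Lean document; each statement's English description precedes it below -/
import Mathlib

section
/- For f = ∏_{i=1}^{2}(x² + aᵢ(xz + y²)) with a₁, a₂ ∈ ℂ, the triple (−(a₁+a₂)x² − 2a₁a₂(y² + xz), a₁a₂yz, 4x² + 2(a₁+a₂)y² + 3(a₁+a₂)xz + 2a₁a₂z²) is a syzygy of the Jacobian ideal of f. -/
open MvPolynomial

theorem stmt_7 (a₁ a₂ : ℂ) (f : MvPolynomial (Fin 3) ℂ)
    (hf : f = (X 0 ^ 2 + C a₁ * (X 0 * X 2 + X 1 ^ 2)) *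
              (X 0 ^ 2 + C a₂ * (X 0 * X 2 + X 1 ^ 2))) :
    (- (C (a₁ + a₂) * X 0 ^ 2) - C (2 * (a₁ * a₂)) * (X 1 ^ 2 + X 0 * X 2)) * pderiv 0 f
    + (C (a₁ * a₂) * X 1 * X 2) * pderiv 1 f
    + (4 * X 0 ^ 2 + C (2 * (a₁ + a₂)) * X 1 ^ 2 + C (3 * (a₁ + a₂)) * X 0 * X 2
        + C (2 * (a₁ * a₂)) * X 2 ^ 2) * pderiv 2 f = 0 := by
  subst hf
  simp only [pderiv_mul, map_add, pderiv_C, pderiv_X, pderiv_pow]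
  simp [Pi.single_apply, map_ofNat]
  ring
end

section
/- Let f = z·∏_{i=1}^{d-1}(aᵢx + bᵢy). Then the Hessian determinant h(f) of f is divisible by f, and the quotient h(f)/f is a polynomial in x and y only. -/
/-!
For `f = z * g` with `g` free of `z`, the Hessian of `f` is `z` times the `x, y`-Hessian of `g`
bordered by the gradient of `g`, so `h(f) = z * H(g)` with `H(g)` the bordered Hessian
determinant. As `g` is a binary form of degree `m`, Euler's identity holds for `g`, and with
`m - 1` for `g_x` and `g_y`. Substituting `(m - 1) g_x = x g_xx + y g_xy` and
`(m - 1) g_y = x g_xy + y g_yy` into `H(g)` gives `(m - 1) H(g) = m (g_xy² - g_xx g_yy) g`.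
For `m ≤ 1` all second partials of `g` vanish.
-/

open MvPolynomial

namespace MvPolynomial

variable {R σ : Type*}

theorem pderiv_pderiv_comm [CommSemiring R] (i j : σ) (p : MvPolynomial σ R) :
    pderiv i (pderiv j p) = pderiv j (pderiv i p) := by
  classical
  induction p using MvPolynomial.induction_on with
  | C c => simp
  | add p q hp hq => simp [hp, hq]
  | mul_X p k hp =>
    have hX (i j : σ) : pderiv i (pderiv j (X k : MvPolynomial σ R)) = 0 := by
      rw [pderiv_X, Pi.single_apply]
      split_ifs <;> simp
    simp only [pderiv_mul, map_add, hp, hX]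
    ring

theorem pderiv_pderiv_eq_zero_of_pderiv_eq_zero [CommSemiring R] {k : σ} {g : MvPolynomial σ R}
    (hg : pderiv k g = 0) (i : σ) : pderiv k (pderiv i g) = 0 := by
  rw [pderiv_pderiv_comm, hg, map_zero]

theorem pderiv_prod_eq_zero [CommSemiring R] {ι : Type*} {k : σ} (s : Finset ι)
    (p : ι → MvPolynomial σ R) (h : ∀ i ∈ s, pderiv k (p i) = 0) :
    pderiv k (∏ i ∈ s, p i) = 0 :=
  Finset.prod_induction _ (fun q ↦ pderiv k q = 0)
    (fun p q hp hq ↦ by rw [pderiv_mul, hp, hq, mul_zero, zero_mul, add_zero])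
    pderiv_one h

theorem IsHomogeneous.pderiv_pderiv_eq_zero [CommSemiring R] {g : MvPolynomial σ R} {n : ℕ}
    (hg : g.IsHomogeneous n) (hn : n ≤ 1) (i j : σ) : pderiv i (pderiv j g) = 0 := by
  have h0 : (pderiv j g).IsHomogeneous 0 := by
    simpa [Nat.sub_eq_zero_of_le hn] using hg.pderiv (i := j)
  rw [totalDegree_eq_zero_iff_eq_C.mp ((totalDegree_zero_iff_isHomogeneous σ).mpr h0), pderiv_C]

variable [CommRing R]

noncomputable def borderedHessian (i j : σ) (g : MvPolynomial σ R) : MvPolynomial σ R :=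
  Matrix.det !![pderiv i (pderiv i g), pderiv i (pderiv j g), pderiv i g;
    pderiv j (pderiv i g), pderiv j (pderiv j g), pderiv j g;
    pderiv i g, pderiv j g, 0]

theorem borderedHessian_eq (i j : σ) (g : MvPolynomial σ R) :
    borderedHessian i j g = 2 * pderiv i g * pderiv j g * pderiv i (pderiv j g)
      - pderiv i g ^ 2 * pderiv j (pderiv j g) - pderiv j g ^ 2 * pderiv i (pderiv i g) := by
  simp [borderedHessian, Matrix.det_fin_three, pderiv_pderiv_comm j i]
  ring

theorem euler_identity_pderiv {i j : σ} (hij : i ≠ j) {g : MvPolynomial σ R} {m : R}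
    (hE : X i * pderiv i g + X j * pderiv j g = C m * g) :
    X i * pderiv i (pderiv i g) + X j * pderiv j (pderiv i g) = (C m - 1) * pderiv i g := by
  have h := congrArg (pderiv i) hE
  simp only [map_add, pderiv_mul, pderiv_X_self, pderiv_X_of_ne hij.symm, pderiv_C,
    pderiv_pderiv_comm i j] at h
  linear_combination h

theorem borderedHessian_eq_mul {K : Type*} [Field K] {i j : σ} (hij : i ≠ j)
    {g : MvPolynomial σ K} {m : K} (hm : m ≠ 1)
    (hE : X i * pderiv i g + X j * pderiv j g = C m * g) :
    borderedHessian i j g = g * (C (m / (m - 1)) *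
      (pderiv i (pderiv j g) ^ 2 - pderiv i (pderiv i g) * pderiv j (pderiv j g))) := by
  have hi := euler_identity_pderiv hij hE
  have hj := euler_identity_pderiv hij.symm ((add_comm _ _).trans hE)
  have hM : (C m - 1 : MvPolynomial σ K) ≠ 0 := by
    rw [← C_1, ← C_sub, Ne, C_eq_zero]
    exact sub_ne_zero.2 hm
  have hc : (C m - 1) * C (m / (m - 1)) = (C m : MvPolynomial σ K) := by
    rw [← C_1, ← C_sub, ← C_mul, mul_div_cancel₀ _ (sub_ne_zero.2 hm)]
  rw [pderiv_pderiv_comm j i] at hi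
  apply mul_left_cancel₀ (pow_ne_zero 2 hM)
  rw [borderedHessian_eq]
  set x : MvPolynomial σ K := X i
  set y : MvPolynomial σ K := X j
  set P := pderiv i g
  set Q := pderiv j g
  set A := pderiv i P
  set B := pderiv i Q
  set D := pderiv j Q
  set M := C m - (1 : MvPolynomial σ K)
  -- substitute `M P = x A + y B` and `M Q = x B + y D` into `M² H`, then use `x P + y Q = m g`
  linear_combination
    (-2 * B * (M * Q) + D * (M * P + (x * A + y * B)) + (B ^ 2 - A * D) * x) * hi +
    (-2 * B * (x * A + y * B) + A * (M * Q + (x * B + y * D)) + (B ^ 2 - A * D) * y) * hj +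
    M * (B ^ 2 - A * D) * hE - M * g * (B ^ 2 - A * D) * hc

theorem det_hessian_X_mul {g : MvPolynomial (Fin 3) R} (hg : pderiv 2 g = 0) :
    (Matrix.of fun i j : Fin 3 => pderiv i (pderiv j (X 2 * g))).det =
      X 2 * borderedHessian 0 1 g := by
  have hg' := pderiv_pderiv_eq_zero_of_pderiv_eq_zero hg
  rw [Matrix.det_fin_three, borderedHessian_eq]
  simp [pderiv_X, hg, hg']
  rw [pderiv_pderiv_comm 1 0]
  ring

end MvPolynomial

theorem stmt_16_general (n : ℕ) (a b : Fin n → ℂ)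
    (f : MvPolynomial (Fin 3) ℂ)
    (hf : f = X 2 * ∏ i, (C (a i) * X 0 + C (b i) * X 1)) :
    ∃ q : MvPolynomial (Fin 3) ℂ,
      Matrix.det (Matrix.of fun i j : Fin 3 => pderiv i (pderiv j f)) = f * q ∧
      pderiv 2 q = 0 := by
  set g : MvPolynomial (Fin 3) ℂ := ∏ i, (C (a i) * X 0 + C (b i) * X 1)
  have hgz : pderiv 2 g = 0 :=
    pderiv_prod_eq_zero _ _ fun i _ ↦ by simp [pderiv_X]
  have hg2 := pderiv_pderiv_eq_zero_of_pderiv_eq_zero hgz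
  have hhom : g.IsHomogeneous n := by
    simpa using IsHomogeneous.prod Finset.univ _ (fun _ ↦ 1)
      fun i _ ↦ (isHomogeneous_C_mul_X (a i) 0).add (isHomogeneous_C_mul_X (b i) 1)
  have hE : X 0 * pderiv 0 g + X 1 * pderiv 1 g = C (n : ℂ) * g := by
    simpa [Fin.sum_univ_three, hgz] using hhom.sum_X_mul_pderiv
  rw [hf, det_hessian_X_mul hgz]
  rcases le_or_gt n 1 with hn | hn
  · refine ⟨0, ?_, map_zero _⟩
    simp [borderedHessian_eq, hhom.pderiv_pderiv_eq_zero hn]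
  · refine ⟨C ((n : ℂ) / (n - 1)) *
      (pderiv 0 (pderiv 1 g) ^ 2 - pderiv 0 (pderiv 0 g) * pderiv 1 (pderiv 1 g)), ?_, ?_⟩
    · rw [borderedHessian_eq_mul (by decide) (by exact_mod_cast hn.ne') hE]
      ring
    · simp [pderiv_pderiv_eq_zero_of_pderiv_eq_zero, hg2]

theorem stmt_16 (n : ℕ) (a b : Fin n → ℂ)
    (hab : ∀ i j, i ≠ j → a i * b j ≠ a j * b i)
    (f : MvPolynomial (Fin 3) ℂ)
    (hf : f = X 2 * ∏ i, (C (a i) * X 0 + C (b i) * X 1)) :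
    ∃ q : MvPolynomial (Fin 3) ℂ,
      Matrix.det (Matrix.of fun i j : Fin 3 => pderiv i (pderiv j f)) = f * q ∧
      pderiv 2 q = 0 :=
  stmt_16_general n a b f hf
end

section
/- Let f₁ = ax + by + cz with a ≠ 0, and f₂ homogeneous with D₀(f₂)₁ spanned by the derivation x∂_y − 2y∂_z. If there exist a degree-1 derivation δ₁ killing f₁, a scalar β, and a nonzero scalar α such that α·E = δ₁ + β·(x∂_y − 2y∂_z), where E = x∂_x + y∂_y + z∂_z, then b = c = 0. -/
open MvPolynomial

theorem stmt_18 (a b c α β : ℂ) (ha : a ≠ 0) (hα : α ≠ 0)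
    (L₁ L₂ : MvPolynomial (Fin 3) ℂ)
    (hL₁ : L₁.IsHomogeneous 1) (hL₂ : L₂.IsHomogeneous 1)
    (h0 : C α * X 0 = L₁ * C (-b) + L₂ * C (-c))
    (h1 : C α * X 1 = L₁ * C a + C β * X 0)
    (h2 : C α * X 2 = L₂ * C a - C (2 * β) * X 1) :
    b = 0 ∧ c = 0 := by
  have hC2 : (C (2 * β) : MvPolynomial (Fin 3) ℂ) = 2 * C β := by
    rw [C_mul, map_ofNat]
  rw [hC2] at h2
  simp only [C_neg] at h0
  have key : C α * (C a * X 0) + C b * (C α * X 1) + C c * (C α * X 2)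
      + 2 * (C c * (C β * X 1)) = C b * (C β * (X 0 : MvPolynomial (Fin 3) ℂ)) := by
    linear_combination (C a : MvPolynomial (Fin 3) ℂ) * h0 +
      (C b : MvPolynomial (Fin 3) ℂ) * h1 + (C c : MvPolynomial (Fin 3) ℂ) * h2
  have hcoeff := fun i : Fin 3 => congrArg (coeff (Finsupp.single i 1)) key
  have k1 := hcoeff 1
  have k2 := hcoeff 2
  simp only [two_mul, coeff_add, coeff_C_mul, coeff_X', Finsupp.single_left_inj] at k1 k2
  simp [Finsupp.single_eq_single_iff] at k1 k2
  have hc : c = 0 := by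
    rcases k2 with h | h
    · exact h
    · exact absurd h hα
  subst hc
  have hb : b = 0 := by
    rcases mul_eq_zero.mp (show α * b = 0 by linear_combination k1) with h | h
    · exact absurd h hα
    · exact h
  exact ⟨hb, rfl⟩
end
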